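/- arXiv:1811.05464 — 2 statements merged into one kernel-verified Lean document; each statement's English description precedes it below -/
import Mathlib

section
/- Let X ~ N(μ, σ²) with σ > 0 and let q̃ = Φ(x*) where x* is the unique negative solution of −xΦ(x) − φ(x)(1 − 2Φ(x)) = 0. For the sets L = A[0, q̃], M = A[q̃, 1 − q̃], R = A[1 − q̃, 1], the conditional variances coincide: σ²_L = σ²_M = σ²_R, where σ²_A = E[(X − E[X | X ∈ A])² | X ∈ A]. -/
open MeasureTheory ProbabilityTheory Filter Real
open scoped Classical NNReal Topology BigOperators ProbabilityTheory

noncomputable section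

/-- The standard normal density function φ. -/
def stdPdf (x : ℝ) : ℝ := (Real.sqrt (2 * Real.pi))⁻¹ * Real.exp (-(x ^ 2) / 2)

/-- The law of N(m, s²). -/
def gauss (m s : ℝ) : Measure ℝ := gaussianReal m (Real.toNNReal (s ^ 2))

/-- The cdf of N(m, s²). -/
def normCdf (m s : ℝ) (x : ℝ) : ℝ := cdf (gauss m s) x

/-- The standard normal cdf Φ. -/
def stdCdf (x : ℝ) : ℝ := normCdf 0 1 x

/-- The quantile function of N(m, s²) (for 0 < p < 1). -/
def normQuantile (m s : ℝ) (p : ℝ) : ℝ := sInf {x : ℝ | p ≤ normCdf m s x}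

/-- The standard normal quantile function Φ⁻¹ (for 0 < p < 1). -/
def stdQuantile (p : ℝ) : ℝ := normQuantile 0 1 p

/-- The conditioning set A[α, β] = {x : F⁻¹(α) < x ≤ F⁻¹(β)} for N(m, s²), with the
conventions F⁻¹(0) = −∞ (no lower restriction) and F⁻¹(1) = +∞ (no upper restriction). -/
def condSet (m s α β : ℝ) : Set ℝ :=
  {x : ℝ | (α = 0 ∨ normQuantile m s α < x) ∧ (β = 1 ∨ x ≤ normQuantile m s β)}

/-- Conditional mean μ_A = E[X | X ∈ A[α,β]] for X ~ N(m, s²). -/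
def condMean (m s α β : ℝ) : ℝ := ∫ x, x ∂((gauss m s)[|condSet m s α β])

/-- Conditional variance σ²_A = E[(X − μ_A)² | X ∈ A[α,β]] for X ~ N(m, s²). -/
def condVar (m s α β : ℝ) : ℝ :=
  ∫ x, (x - condMean m s α β) ^ 2 ∂((gauss m s)[|condSet m s α β])

/-- Conditional fourth central moment E[(X − μ_A)⁴ | X ∈ A[α,β]] for X ~ N(m, s²). -/
def condMom4 (m s α β : ℝ) : ℝ :=
  ∫ x, (x - condMean m s α β) ^ 4 ∂((gauss m s)[|condSet m s α β])

/-- Conditional kurtosis κ_A = (σ²_A)⁻² E[(X − μ_A)⁴ | X ∈ A[α,β]] for X ~ N(m, s²). -/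
def condKurt (m s α β : ℝ) : ℝ := (condVar m s α β ^ 2)⁻¹ * condMom4 m s α β

/-- The asymptotic variance τ²_A of the conditional variance estimator, with the
convention 0·∞ = 0 when α = 0 (a = −∞) or β = 1 (b = +∞). -/
def tauSq (m s α β : ℝ) : ℝ :=
  ((β - α) ^ 2)⁻¹ *
    ((β - α) * condVar m s α β ^ 2 * (condKurt m s α β - 1)
      + (if α = 0 then 0 else
          α * (1 - α) * ((normQuantile m s α - condMean m s α β) ^ 2 - condVar m s α β) ^ 2)
      + (if β = 1 then 0 else
          β * (1 - β) * ((normQuantile m s β - condMean m s α β) ^ 2 - condVar m s α β) ^ 2)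
      - (if α = 0 ∨ β = 1 then 0 else
          2 * α * (1 - β) * ((normQuantile m s α - condMean m s α β) ^ 2 - condVar m s α β)
            * ((normQuantile m s β - condMean m s α β) ^ 2 - condVar m s α β)))

/-- The random variable Y^A (as a function of the value of X), for X ~ N(m, s²) and
A = A[α,β]; terms involving the infinite endpoints a = −∞ (α = 0) or b = +∞ (β = 1)
vanish by the convention 0·∞ = 0. -/
def Yfun (m s α β : ℝ) (x : ℝ) : ℝ :=
  (if x ∈ condSet m s α β then (x - condMean m s α β) ^ 2 - condVar m s α β else 0)
    + (if α = 0 then 0 else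
        ((if x ≤ normQuantile m s α then (1 : ℝ) else 0) - α)
          * ((normQuantile m s α - condMean m s α β) ^ 2 - condVar m s α β))
    + (if β = 1 then 0 else
        (β - if x ≤ normQuantile m s β then (1 : ℝ) else 0)
          * ((normQuantile m s β - condMean m s α β) ^ 2 - condVar m s α β))

/-- Covariance of U(X) and V(X) for X ~ N(m, s²). -/
def covG (m s : ℝ) (U V : ℝ → ℝ) : ℝ :=
  ∫ x, U x * V x ∂(gauss m s) - (∫ x, U x ∂(gauss m s)) * (∫ x, V x ∂(gauss m s))

/-- Variance of U(X) for X ~ N(m, s²). -/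
def varG (m s : ℝ) (U : ℝ → ℝ) : ℝ := covG m s U U

/-- The quantile pairs defining the sets L = A[0,q̃], M = A[q̃,1−q̃], R = A[1−q̃,1]. -/
def lmrSet (q : ℝ) : Fin 3 → ℝ × ℝ := ![(0, q), (q, 1 - q), (1 - q, 1)]

/-- The weights (q̃, 1 − 2q̃, q̃). -/
def lmrWeight (q : ℝ) : Fin 3 → ℝ := ![q, 1 - 2 * q, q]

/-- The 3×3 asymptotic covariance matrix Σ with entries
Σ_{jk} = Cov(Y₁^{A_j}/w_j, Y₁^{A_k}/w_k), for X ~ N(m, s²). -/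
def SigmaMat (m s q : ℝ) : Matrix (Fin 3) (Fin 3) ℝ := fun j k =>
  covG m s (fun x => Yfun m s (lmrSet q j).1 (lmrSet q j).2 x / lmrWeight q j)
    (fun x => Yfun m s (lmrSet q k).1 (lmrSet q k).2 x / lmrWeight q k)

/-- τ² = [1, −2, 1] Σ [1, −2, 1]ᵀ. -/
def tau2 (m s q : ℝ) : ℝ := dotProduct ![1, -2, 1] ((SigmaMat m s q).mulVec ![1, -2, 1])

/-- The normalising constant ρ = τ/σ². -/
def rhoConst (m s q : ℝ) : ℝ := Real.sqrt (tau2 m s q) / s ^ 2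

/-- The k-th order statistic (k = 1, …, n) of the first n sample points X₁, …, Xₙ. -/
def orderStat {Ω : Type*} (X : ℕ → Ω → ℝ) (n k : ℕ) (ω : Ω) : ℝ :=
  sInf {t : ℝ | k ≤ (Finset.filter (fun i => X i ω ≤ t) (Finset.range n)).card}

/-- Conditional sample mean X̄_A = m_n⁻¹ Σ_{i=⌊nα⌋+1}^{⌊nβ⌋} X_(i), m_n = ⌊nβ⌋ − ⌊nα⌋. -/
def condSampleMean {Ω : Type*} (X : ℕ → Ω → ℝ) (α β : ℝ) (n : ℕ) (ω : Ω) : ℝ :=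
  ((⌊(n : ℝ) * β⌋₊ - ⌊(n : ℝ) * α⌋₊ : ℕ) : ℝ)⁻¹ *
    ∑ i ∈ Finset.Ioc ⌊(n : ℝ) * α⌋₊ ⌊(n : ℝ) * β⌋₊, orderStat X n i ω

/-- Conditional sample variance σ̂²_A = m_n⁻¹ Σ_{i=⌊nα⌋+1}^{⌊nβ⌋} (X_(i) − X̄_A)². -/
def condSampleVar {Ω : Type*} (X : ℕ → Ω → ℝ) (α β : ℝ) (n : ℕ) (ω : Ω) : ℝ :=
  ((⌊(n : ℝ) * β⌋₊ - ⌊(n : ℝ) * α⌋₊ : ℕ) : ℝ)⁻¹ *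
    ∑ i ∈ Finset.Ioc ⌊(n : ℝ) * α⌋₊ ⌊(n : ℝ) * β⌋₊,
      (orderStat X n i ω - condSampleMean X α β n ω) ^ 2

/-- Conditional variance estimator centered at a given value c:
m_n⁻¹ Σ_{i=⌊nα⌋+1}^{⌊nβ⌋} (X_(i) − c)². -/
def condSampleVarKnown {Ω : Type*} (X : ℕ → Ω → ℝ) (α β : ℝ) (c : ℝ) (n : ℕ) (ω : Ω) : ℝ :=
  ((⌊(n : ℝ) * β⌋₊ - ⌊(n : ℝ) * α⌋₊ : ℕ) : ℝ)⁻¹ *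
    ∑ i ∈ Finset.Ioc ⌊(n : ℝ) * α⌋₊ ⌊(n : ℝ) * β⌋₊, (orderStat X n i ω - c) ^ 2

/-- Convergence in distribution: the laws of S n under P converge weakly to ν,
tested against bounded continuous functions. -/
def ConvInDistrib {Ω : Type*} [MeasurableSpace Ω] (P : Measure Ω) (S : ℕ → Ω → ℝ)
    (ν : Measure ℝ) : Prop :=
  ∀ f : BoundedContinuousFunction ℝ ℝ,
    Tendsto (fun n => ∫ ω, f (S n ω) ∂P) atTop (𝓝 (∫ x, f x ∂ν))

end

noncomputable section

/-- The k-th smallest value (k = 1, …, n) among x 0, …, x (n−1). -/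
def orderStatF (n : ℕ) (x : ℕ → ℝ) (k : ℕ) : ℝ :=
  sInf {t : ℝ | k ≤ (Finset.filter (fun i => x i ≤ t) (Finset.range n)).card}

/-- Conditional sample mean of the data x over the index range ⌊nα⌋+1, …, ⌊nβ⌋. -/
def sampleMeanF (n : ℕ) (α β : ℝ) (x : ℕ → ℝ) : ℝ :=
  ((⌊(n : ℝ) * β⌋₊ - ⌊(n : ℝ) * α⌋₊ : ℕ) : ℝ)⁻¹ *
    ∑ i ∈ Finset.Ioc ⌊(n : ℝ) * α⌋₊ ⌊(n : ℝ) * β⌋₊, orderStatF n x i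

/-- Conditional sample variance of the data x over the index range ⌊nα⌋+1, …, ⌊nβ⌋. -/
def sampleVarF (n : ℕ) (α β : ℝ) (x : ℕ → ℝ) : ℝ :=
  ((⌊(n : ℝ) * β⌋₊ - ⌊(n : ℝ) * α⌋₊ : ℕ) : ℝ)⁻¹ *
    ∑ i ∈ Finset.Ioc ⌊(n : ℝ) * α⌋₊ ⌊(n : ℝ) * β⌋₊,
      (orderStatF n x i - sampleMeanF n α β x) ^ 2

/-- The (unnormalised) test statistic
T(x) = (σ̂²_L(x) + σ̂²_R(x) − 2 σ̂²_M(x)) √n / σ̂²(x) for the split 0 < q̃ < 1 − q̃ < 1. -/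
def TstatF (q : ℝ) (n : ℕ) (x : ℕ → ℝ) : ℝ :=
  (sampleVarF n 0 q x + sampleVarF n (1 - q) 1 x - 2 * sampleVarF n q (1 - q) x)
    * Real.sqrt n / sampleVarF n 0 1 x

end


/-!
Integration by parts against the density `p` of `N(m, s²)`, for which `s² p' = -(x - m) p`,
gives the truncated moments `∫_{x ≤ c} (x - m) = -s² p(c)` and
`∫_{x ≤ c} (x - m)² = s² (P(X ≤ c) - (c - m) p(c))`, and their mirror images on `x > c`.
With `q̃ = Φ(x*)` the cut points are `m ± s x*`, and writing `Φ = Φ(x*)`, `φ = φ(x*)` one gets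
`σ²_L = σ²_R = s² (1 - x* φ/Φ - (φ/Φ)²)` and `σ²_M = s² (1 + 2 x* φ/(1 - 2Φ))`.
The difference of the two brackets is a multiple of `x* Φ + φ (1 - 2Φ)`, which vanishes by
the choice of `x*`.
-/

open Set

section HalfLineFTC

variable {E : Type*} [NormedAddCommGroup E] [NormedSpace ℝ E] [CompleteSpace E]
  {f f' : ℝ → E}

theorem integral_Iic_of_hasDerivAt_of_integrable (hderiv : ∀ x, HasDerivAt f (f' x) x)
    (hf' : Integrable f') (hf : Integrable f) (c : ℝ) :
    ∫ x in Iic c, f' x = f c := by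
  have hlim := tendsto_zero_of_hasDerivAt_of_integrableOn_Iic (a := c) (fun x _ ↦ hderiv x)
    hf'.integrableOn hf.integrableOn
  simpa using integral_Iic_of_hasDerivAt_of_tendsto' (fun x _ ↦ hderiv x) hf'.integrableOn hlim

theorem integral_Ioi_of_hasDerivAt_of_integrable (hderiv : ∀ x, HasDerivAt f (f' x) x)
    (hf' : Integrable f') (hf : Integrable f) (c : ℝ) :
    ∫ x in Ioi c, f' x = -f c := by
  have hlim := tendsto_zero_of_hasDerivAt_of_integrableOn_Ioi (a := c) (fun x _ ↦ hderiv x)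
    hf'.integrableOn hf.integrableOn
  simpa using integral_Ioi_of_hasDerivAt_of_tendsto' (fun x _ ↦ hderiv x) hf'.integrableOn hlim

end HalfLineFTC

theorem setIntegral_Ioc_eq_sub {μ : Measure ℝ} {f : ℝ → ℝ} {a b : ℝ} (hab : a ≤ b)
    (hf : IntegrableOn f (Iic b) μ) :
    ∫ x in Ioc a b, f x ∂μ = ∫ x in Iic b, f x ∂μ - ∫ x in Iic a, f x ∂μ := by
  rw [intervalIntegral.integral_Iic_sub_Iic (hf.mono_set (Iic_subset_Iic.2 hab)) hf,
    intervalIntegral.integral_of_le hab]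

theorem measureReal_Ioc_eq_sub {μ : Measure ℝ} [IsFiniteMeasure μ] {a b : ℝ} (hab : a ≤ b) :
    μ.real (Ioc a b) = μ.real (Iic b) - μ.real (Iic a) := by
  simpa using setIntegral_Ioc_eq_sub (μ := μ) (f := fun _ ↦ 1) hab integrableOn_const

section CondVariance

variable {Ω : Type*} [MeasurableSpace Ω] {μ : Measure Ω} {s : Set Ω}

theorem integral_cond_eq_inv_mul_setIntegral (f : Ω → ℝ) :
    ∫ ω, f ω ∂μ[|s] = (μ.real s)⁻¹ * ∫ ω in s, f ω ∂μ := by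
  rw [ProbabilityTheory.cond, integral_smul_measure, ENNReal.toReal_inv, smul_eq_mul,
    measureReal_def]

theorem integral_sub_integral_cond_sq [IsFiniteMeasure μ] {X : Ω → ℝ} (hX : MemLp X 2 μ)
    (hs : μ s ≠ 0) (m : ℝ) :
    ∫ ω, (X ω - ∫ ω', X ω' ∂μ[|s]) ^ 2 ∂μ[|s]
      = (μ.real s)⁻¹ * ∫ ω in s, (X ω - m) ^ 2 ∂μ
        - ((μ.real s)⁻¹ * ∫ ω in s, (X ω - m) ∂μ) ^ 2 := by
  have := cond_isProbabilityMeasure (μ := μ) hs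
  have hXs : MemLp X 2 μ[|s] := (hX.restrict s).smul_measure (ENNReal.inv_ne_top.2 hs)
  calc ∫ ω, (X ω - ∫ ω', X ω' ∂μ[|s]) ^ 2 ∂μ[|s]
      = Var[fun ω ↦ X ω - m; μ[|s]] := by
        rw [variance_sub_const hXs.aestronglyMeasurable,
          variance_eq_integral hXs.aestronglyMeasurable.aemeasurable]
    _ = ∫ ω, (X ω - m) ^ 2 ∂μ[|s] - (∫ ω, (X ω - m) ∂μ[|s]) ^ 2 :=
        variance_eq_sub (hXs.sub (memLp_const m))
    _ = _ := by rw [integral_cond_eq_inv_mul_setIntegral, integral_cond_eq_inv_mul_setIntegral]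

end CondVariance

section Gaussian

variable {m : ℝ} {v : ℝ≥0}

theorem gaussianReal_ne_zero_of_volume_ne_zero (hv : v ≠ 0) {s : Set ℝ}
    (hs : volume s ≠ 0) : gaussianReal m v s ≠ 0 :=
  fun h ↦ hs (gaussianReal_absolutelyContinuous' m hv h)

theorem strictMono_cdf_gaussianReal (hv : v ≠ 0) :
    StrictMono (cdf (gaussianReal m v)) := by
  intro x y hxy
  have h := gaussianReal_ne_zero_of_volume_ne_zero (m := m) hv (s := Ioc x y) (by simp [hxy])
  rwa [← measure_cdf (gaussianReal m v), StieltjesFunction.measure_Ioc, ne_eq,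
    ENNReal.ofReal_eq_zero, not_le, sub_pos] at h

theorem hasDerivAt_gaussianPDFReal (x : ℝ) :
    HasDerivAt (gaussianPDFReal m v) (-((x - m) / v) * gaussianPDFReal m v x) x := by
  have hexponent : HasDerivAt (fun y ↦ -(y - m) ^ 2 / (2 * v)) (-((x - m) / v)) x := by
    refine ((((hasDerivAt_id' x).sub_const m).fun_pow 2).fun_neg.div_const _).congr_deriv ?_
    field_simp
    ring
  rw [gaussianPDFReal_def]
  exact (hexponent.exp.const_mul _).congr_deriv (by ring)

theorem integrable_sub_pow_mul_gaussianPDFReal (hv : v ≠ 0) (k : ℕ) :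
    Integrable fun x ↦ (x - m) ^ k * gaussianPDFReal m v x := by
  have hb : (0 : ℝ) < (2 * v : ℝ)⁻¹ := by
    have : (0 : ℝ) < v := NNReal.coe_pos.2 (pos_iff_ne_zero.2 hv)
    positivity
  have h := integrable_rpow_mul_exp_neg_mul_sq hb (s := k) (by linarith [k.cast_nonneg (α := ℝ)])
  refine ((h.comp_sub_right m).const_mul (√(2 * π * v))⁻¹).congr (ae_of_all _ fun x ↦ ?_)
  have hexponent : -(2 * v : ℝ)⁻¹ * (x - m) ^ 2 = -(x - m) ^ 2 / (2 * v) := by ring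
  simp only [Real.rpow_natCast, gaussianPDFReal_def, hexponent]
  ring

theorem hasDerivAt_neg_var_mul_gaussianPDFReal (hv : v ≠ 0) (x : ℝ) :
    HasDerivAt (fun y ↦ -v * gaussianPDFReal m v y) ((x - m) * gaussianPDFReal m v x) x := by
  have : (v : ℝ) ≠ 0 := NNReal.coe_ne_zero.2 hv
  refine ((hasDerivAt_gaussianPDFReal x).const_mul _).congr_deriv ?_
  field_simp

theorem hasDerivAt_neg_var_mul_sub_mul_gaussianPDFReal (hv : v ≠ 0) (x : ℝ) :
    HasDerivAt (fun y ↦ -v * ((y - m) * gaussianPDFReal m v y))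
      (((x - m) ^ 2 - v) * gaussianPDFReal m v x) x := by
  have : (v : ℝ) ≠ 0 := NNReal.coe_ne_zero.2 hv
  refine ((((hasDerivAt_id' x).sub_const m).mul (hasDerivAt_gaussianPDFReal x)).const_mul _
    ).congr_deriv ?_
  field_simp
  ring

theorem setIntegral_gaussianReal_eq (hv : v ≠ 0) (s : Set ℝ) (f : ℝ → ℝ) :
    ∫ x in s, f x ∂gaussianReal m v = ∫ x in s, f x * gaussianPDFReal m v x := by
  rw [gaussianReal_of_var_ne_zero _ hv, setIntegral_withDensity_eq_setIntegral_toReal_smul' s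
    (measurable_gaussianPDF _ _) (ae_of_all _ fun _ ↦ gaussianPDF_lt_top)]
  simp only [toReal_gaussianPDF, smul_eq_mul, mul_comm]

theorem measureReal_gaussianReal_eq (hv : v ≠ 0) (s : Set ℝ) :
    (gaussianReal m v).real s = ∫ x in s, gaussianPDFReal m v x := by
  simpa using setIntegral_gaussianReal_eq (m := m) hv s 1

theorem setIntegral_Iic_sub_gaussianReal (hv : v ≠ 0) (c : ℝ) :
    ∫ x in Iic c, (x - m) ∂gaussianReal m v = -v * gaussianPDFReal m v c := by
  rw [setIntegral_gaussianReal_eq hv]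
  refine integral_Iic_of_hasDerivAt_of_integrable (hasDerivAt_neg_var_mul_gaussianPDFReal hv) ?_
    ((integrable_gaussianPDFReal m v).const_mul _) c
  simpa using integrable_sub_pow_mul_gaussianPDFReal (m := m) hv 1

theorem setIntegral_Ioi_sub_gaussianReal (hv : v ≠ 0) (c : ℝ) :
    ∫ x in Ioi c, (x - m) ∂gaussianReal m v = v * gaussianPDFReal m v c := by
  rw [setIntegral_gaussianReal_eq hv, integral_Ioi_of_hasDerivAt_of_integrable (hasDerivAt_neg_var_mul_gaussianPDFReal hv) ?_
    ((integrable_gaussianPDFReal m v).const_mul _) c]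
  · ring
  · simpa using integrable_sub_pow_mul_gaussianPDFReal (m := m) hv 1

theorem integrable_sub_sq_sub_var_mul_gaussianPDFReal (hv : v ≠ 0) :
    Integrable fun x ↦ ((x - m) ^ 2 - v) * gaussianPDFReal m v x := by
  refine ((integrable_sub_pow_mul_gaussianPDFReal (m := m) hv 2).sub
    ((integrable_gaussianPDFReal m v).const_mul v)).congr (ae_of_all _ fun x ↦ ?_)
  simp only [Pi.sub_apply]
  ring

theorem setIntegral_sub_sq_gaussianReal (hv : v ≠ 0) (s : Set ℝ) :
    ∫ x in s, (x - m) ^ 2 ∂gaussianReal m v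
      = (∫ x in s, ((x - m) ^ 2 - v) * gaussianPDFReal m v x) + v * (gaussianReal m v).real s := by
  rw [setIntegral_gaussianReal_eq hv, measureReal_gaussianReal_eq hv, ← integral_const_mul,
    ← integral_add (integrable_sub_sq_sub_var_mul_gaussianPDFReal hv).integrableOn
      ((integrable_gaussianPDFReal m v).const_mul _).integrableOn]
  congr with x
  ring

theorem setIntegral_Iic_sub_sq_gaussianReal (hv : v ≠ 0) (c : ℝ) :
    ∫ x in Iic c, (x - m) ^ 2 ∂gaussianReal m v
      = v * ((gaussianReal m v).real (Iic c) - (c - m) * gaussianPDFReal m v c) := by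
  rw [setIntegral_sub_sq_gaussianReal hv, integral_Iic_of_hasDerivAt_of_integrable
    (hasDerivAt_neg_var_mul_sub_mul_gaussianPDFReal hv)
    (integrable_sub_sq_sub_var_mul_gaussianPDFReal hv) ?_ c]
  · ring
  · simpa using (integrable_sub_pow_mul_gaussianPDFReal (m := m) hv 1).const_mul (-(v : ℝ))

theorem setIntegral_Ioi_sub_sq_gaussianReal (hv : v ≠ 0) (c : ℝ) :
    ∫ x in Ioi c, (x - m) ^ 2 ∂gaussianReal m v
      = v * ((gaussianReal m v).real (Ioi c) + (c - m) * gaussianPDFReal m v c) := by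
  rw [setIntegral_sub_sq_gaussianReal hv, integral_Ioi_of_hasDerivAt_of_integrable
    (hasDerivAt_neg_var_mul_sub_mul_gaussianPDFReal hv)
    (integrable_sub_sq_sub_var_mul_gaussianPDFReal hv) ?_ c]
  · ring
  · simpa using (integrable_sub_pow_mul_gaussianPDFReal (m := m) hv 1).const_mul (-(v : ℝ))

end Gaussian
section Normal

variable {m s : ℝ}

theorem toNNReal_sq_ne_zero (hs : s ≠ 0) : (s ^ 2).toNNReal ≠ 0 := by
  simpa [sq_nonneg s] using hs

instance (m s : ℝ) : IsProbabilityMeasure (gauss m s) := by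
  unfold gauss
  infer_instance

theorem gauss_eq_map (m s : ℝ) : gauss m s = (gauss 0 1).map ((m + ·) ∘ (s * ·)) := by
  rw [gauss, gauss, ← Measure.map_map (measurable_const_add m) (measurable_const_mul s),
    gaussianReal_map_const_mul, gaussianReal_map_const_add]
  congr 1
  · ring
  · ext
    simp [sq_nonneg s]

theorem normCdf_add_mul (hs : 0 < s) (t : ℝ) : normCdf m s (m + s * t) = stdCdf t := by
  unfold stdCdf normCdf
  rw [cdf_eq_real, cdf_eq_real, gauss_eq_map m s,
    map_measureReal_apply (by fun_prop) measurableSet_Iic]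
  congr 1
  ext x
  simp [mul_le_mul_iff_of_pos_left hs]

theorem stdCdf_neg (t : ℝ) : stdCdf (-t) = 1 - stdCdf t := by
  have : NullSingletonClass (gauss 0 1) :=
    nullSingletonClass_gaussianReal (toNNReal_sq_ne_zero one_ne_zero)
  have hsymm : (gauss 0 1).map (fun x ↦ -x) = gauss 0 1 := by
    rw [gauss, gaussianReal_map_neg, neg_zero]
  unfold stdCdf normCdf
  rw [cdf_eq_real, cdf_eq_real]
  conv_lhs => rw [← hsymm, map_measureReal_apply (by fun_prop) measurableSet_Iic]
  rw [show (fun x ↦ -x) ⁻¹' Iic (-t) = (Iio t)ᶜ by ext; simp, measureReal_compl measurableSet_Iio,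
    probReal_univ, measureReal_congr Iio_ae_eq_Iic]

theorem strictMono_normCdf (hs : s ≠ 0) : StrictMono (normCdf m s) :=
  strictMono_cdf_gaussianReal (toNNReal_sq_ne_zero hs)

theorem stdCdf_pos (t : ℝ) : 0 < stdCdf t := by
  unfold stdCdf normCdf
  rw [cdf_eq_real]
  exact ENNReal.toReal_pos (gaussianReal_ne_zero_of_volume_ne_zero
    (toNNReal_sq_ne_zero one_ne_zero) (by simp)) (measure_ne_top _ _)

theorem stdCdf_lt_one (t : ℝ) : stdCdf t < 1 := by
  linarith [stdCdf_pos (-t), stdCdf_neg t]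

theorem stdCdf_lt_half {t : ℝ} (ht : t < 0) : stdCdf t < 1 / 2 := by
  have hzero : stdCdf 0 = 1 / 2 := by
    have := stdCdf_neg 0
    rw [neg_zero] at this
    linarith
  exact hzero ▸ strictMono_normCdf one_ne_zero ht

theorem normQuantile_normCdf (hs : s ≠ 0) (c : ℝ) : normQuantile m s (normCdf m s c) = c := by
  unfold normQuantile
  simp_rw [(strictMono_normCdf hs).le_iff_le]
  exact csInf_Ici

theorem normQuantile_stdCdf (hs : 0 < s) (t : ℝ) : normQuantile m s (stdCdf t) = m + s * t := by
  rw [← normCdf_add_mul hs, normQuantile_normCdf hs.ne']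

theorem normQuantile_one_sub_stdCdf (hs : 0 < s) (t : ℝ) :
    normQuantile m s (1 - stdCdf t) = m - s * t := by
  rw [← stdCdf_neg, normQuantile_stdCdf hs]
  ring

theorem gaussianPDFReal_add_mul (hs : 0 < s) (t : ℝ) :
    gaussianPDFReal m (s ^ 2).toNNReal (m + s * t) = stdPdf t / s := by
  rw [gaussianPDFReal_def, stdPdf, Real.coe_toNNReal _ (sq_nonneg s),
    show 2 * π * s ^ 2 = (2 * π) * s ^ 2 by ring, Real.sqrt_mul (by positivity),
    Real.sqrt_sq hs.le]
  have hexponent : -(m + s * t - m) ^ 2 / (2 * s ^ 2) = -t ^ 2 / 2 := by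
    field_simp
    ring
  simp only [hexponent]
  field_simp

end Normal

section TruncatedNormal

variable {m s : ℝ}

theorem measureReal_Iic_add_mul (hs : 0 < s) (t : ℝ) :
    (gaussianReal m (s ^ 2).toNNReal).real (Iic (m + s * t)) = stdCdf t := by
  rw [← normCdf_add_mul hs, normCdf, cdf_eq_real]
  rfl

theorem measureReal_Iic_sub_mul (hs : 0 < s) (t : ℝ) :
    (gaussianReal m (s ^ 2).toNNReal).real (Iic (m - s * t)) = 1 - stdCdf t := by
  rw [sub_eq_add_neg, ← mul_neg, measureReal_Iic_add_mul hs, stdCdf_neg]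

theorem measureReal_Ioi_sub_mul (hs : 0 < s) (t : ℝ) :
    (gaussianReal m (s ^ 2).toNNReal).real (Ioi (m - s * t)) = stdCdf t := by
  rw [← compl_Iic, measureReal_compl measurableSet_Iic, probReal_univ,
    measureReal_Iic_sub_mul hs]
  ring

theorem gaussianPDFReal_sub_mul (hs : 0 < s) (t : ℝ) :
    gaussianPDFReal m (s ^ 2).toNNReal (m - s * t) = stdPdf t / s := by
  rw [sub_eq_add_neg, ← mul_neg, gaussianPDFReal_add_mul hs, stdPdf, stdPdf, neg_sq]

theorem condSet_zero_stdCdf (hs : 0 < s) (t : ℝ) :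
    condSet m s 0 (stdCdf t) = Iic (m + s * t) := by
  ext x
  simp [condSet, normQuantile_stdCdf hs, (stdCdf_lt_one t).ne]

theorem condSet_stdCdf_one_sub_stdCdf (hs : 0 < s) (t : ℝ) :
    condSet m s (stdCdf t) (1 - stdCdf t) = Ioc (m + s * t) (m - s * t) := by
  ext x
  simp [condSet, normQuantile_stdCdf hs, normQuantile_one_sub_stdCdf hs, (stdCdf_pos t).ne']

theorem condSet_one_sub_stdCdf_one (hs : 0 < s) (t : ℝ) :
    condSet m s (1 - stdCdf t) 1 = Ioi (m - s * t) := by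
  ext x
  simp [condSet, normQuantile_one_sub_stdCdf hs, sub_eq_zero, (stdCdf_lt_one t).ne']

theorem condVar_eq_of_condSet_eq {α β : ℝ} {A : Set ℝ} (hs : s ≠ 0)
    (hA : condSet m s α β = A) (hvol : volume A ≠ 0) :
    condVar m s α β
      = ((gaussianReal m (s ^ 2).toNNReal).real A)⁻¹
          * ∫ x in A, (x - m) ^ 2 ∂gaussianReal m (s ^ 2).toNNReal
        - (((gaussianReal m (s ^ 2).toNNReal).real A)⁻¹
          * ∫ x in A, (x - m) ∂gaussianReal m (s ^ 2).toNNReal) ^ 2 := by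
  rw [_root_.condVar, condMean, hA]
  exact integral_sub_integral_cond_sq (memLp_id_gaussianReal 2)
    (gaussianReal_ne_zero_of_volume_ne_zero (toNNReal_sq_ne_zero hs) hvol) m

theorem condVar_zero_stdCdf (hs : 0 < s) (t : ℝ) :
    condVar m s 0 (stdCdf t)
      = s ^ 2 * (1 - t * stdPdf t / stdCdf t - (stdPdf t / stdCdf t) ^ 2) := by
  have hv := toNNReal_sq_ne_zero hs.ne'
  rw [condVar_eq_of_condSet_eq hs.ne' (condSet_zero_stdCdf hs t) (by simp),
    setIntegral_Iic_sub_sq_gaussianReal hv, setIntegral_Iic_sub_gaussianReal hv,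
    measureReal_Iic_add_mul hs, gaussianPDFReal_add_mul hs, Real.coe_toNNReal _ (sq_nonneg s)]
  have := (stdCdf_pos t).ne'
  field_simp
  ring

theorem condVar_one_sub_stdCdf_one (hs : 0 < s) (t : ℝ) :
    condVar m s (1 - stdCdf t) 1
      = s ^ 2 * (1 - t * stdPdf t / stdCdf t - (stdPdf t / stdCdf t) ^ 2) := by
  have hv := toNNReal_sq_ne_zero hs.ne'
  rw [condVar_eq_of_condSet_eq hs.ne' (condSet_one_sub_stdCdf_one hs t) (by simp),
    setIntegral_Ioi_sub_sq_gaussianReal hv, setIntegral_Ioi_sub_gaussianReal hv,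
    measureReal_Ioi_sub_mul hs, gaussianPDFReal_sub_mul hs, Real.coe_toNNReal _ (sq_nonneg s)]
  have := (stdCdf_pos t).ne'
  field_simp
  ring

theorem condVar_stdCdf_one_sub_stdCdf (hs : 0 < s) {t : ℝ} (ht : t < 0) :
    condVar m s (stdCdf t) (1 - stdCdf t)
      = s ^ 2 * (1 + 2 * t * stdPdf t / (1 - 2 * stdCdf t)) := by
  have hv := toNNReal_sq_ne_zero hs.ne'
  have hab : m + s * t ≤ m - s * t := by nlinarith
  have hvol : volume (Ioc (m + s * t) (m - s * t)) ≠ 0 := by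
    rw [Real.volume_Ioc, ne_eq, ENNReal.ofReal_eq_zero, not_le]
    nlinarith
  rw [condVar_eq_of_condSet_eq hs.ne' (condSet_stdCdf_one_sub_stdCdf hs t) hvol,
    measureReal_Ioc_eq_sub hab, setIntegral_Ioc_eq_sub hab, setIntegral_Ioc_eq_sub hab,
    setIntegral_Iic_sub_sq_gaussianReal hv, setIntegral_Iic_sub_sq_gaussianReal hv,
    setIntegral_Iic_sub_gaussianReal hv, setIntegral_Iic_sub_gaussianReal hv,
    measureReal_Iic_add_mul hs, measureReal_Iic_sub_mul hs, gaussianPDFReal_add_mul hs,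
    gaussianPDFReal_sub_mul hs, Real.coe_toNNReal _ (sq_nonneg s),
    show 1 - stdCdf t - stdCdf t = 1 - 2 * stdCdf t by ring]
  · have : 1 - 2 * stdCdf t ≠ 0 := by linarith [stdCdf_lt_half ht]
    field_simp
    ring
  · exact ((memLp_id_gaussianReal 1).integrable le_rfl).sub (integrable_const m) |>.integrableOn
  · exact ((memLp_id_gaussianReal 2).sub (memLp_const m)).integrable_sq.integrableOn

end TruncatedNormal

theorem rule_20_60_20_condVar_eq
    (m s : ℝ) (hs : 0 < s) (x₀ q : ℝ) (hx₀ : x₀ < 0)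
    (hroot : -x₀ * stdCdf x₀ - stdPdf x₀ * (1 - 2 * stdCdf x₀) = 0)
    (hq : q = stdCdf x₀) :
    condVar m s 0 q = condVar m s q (1 - q) ∧
    condVar m s q (1 - q) = condVar m s (1 - q) 1 := by
  subst hq
  have hlower : stdCdf x₀ ≠ 0 := (stdCdf_pos x₀).ne'
  have hmid : 1 - 2 * stdCdf x₀ ≠ 0 := by linarith [stdCdf_lt_half hx₀]
  have hcoeff : 1 - x₀ * stdPdf x₀ / stdCdf x₀ - (stdPdf x₀ / stdCdf x₀) ^ 2
      = 1 + 2 * x₀ * stdPdf x₀ / (1 - 2 * stdCdf x₀) := by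
    rw [eq_comm, ← sub_eq_zero]
    field_simp
    linear_combination (-stdPdf x₀) * hroot
  rw [condVar_zero_stdCdf hs, condVar_stdCdf_one_sub_stdCdf hs hx₀, condVar_one_sub_stdCdf_one hs,
    hcoeff]
  exact ⟨rfl, rfl⟩
end

section
/- Let X ~ N(μ, σ²) with σ > 0 and let τ² = [1, −2, 1] Σ [1, −2, 1]^T, where Σ is the 3×3 covariance matrix with entries Σ_{jk} = Cov(Y_1^{A_j}/w_j, Y_1^{A_k}/w_k) for (A_1, A_2, A_3) = (L, M, R) = (A[0,q̃], A[q̃,1−q̃], A[1−q̃,1]) and weights (w_1, w_2, w_3) = (q̃, 1−2q̃, q̃), with q̃ = Φ(x*) for x* the unique negative solution of −xΦ(x) − φ(x)(1−2Φ(x)) = 0. Then the matrix Σ/σ⁴, and hence the normalising constant ρ := τ/σ², does not depend on μ and σ: ρ equals the value of τ obtained when X is standard normal. -/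
open MeasureTheory ProbabilityTheory Filter Real
open scoped Classical NNReal Topology BigOperators ProbabilityTheory

/-!
The increasing affine map `x ↦ s * x + m` pushes `N(0, 1)` forward to `N(m, s²)`, so it carries
quantiles to quantiles and the conditioning sets `A[α, β]` of `N(0, 1)` onto those of `N(m, s²)`.
Conditional means therefore transform affinely and conditional variances by the factor `s²`, which
gives `Y^A(s x + m) = s² Y^A(x)` pointwise; every covariance in `Σ` picks up the factor `s⁴`, and
`τ` the factor `s²`.
-/

section Quantile

open Set

variable {μ : Measure ℝ} {p : ℝ}

lemma nonempty_setOf_le_cdf (hp : p < 1) : {x | p ≤ cdf μ x}.Nonempty :=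
  ((tendsto_cdf_atTop μ).eventually (eventually_ge_nhds hp)).exists

lemma bddBelow_setOf_le_cdf (hp : 0 < p) : BddBelow {x | p ≤ cdf μ x} := by
  obtain ⟨y, hy⟩ := ((tendsto_cdf_atBot μ).eventually (eventually_lt_nhds hp)).exists
  exact ⟨y, fun x hx => le_of_not_gt fun hxy => (hx.trans (monotone_cdf μ hxy.le)).not_gt hy⟩

lemma cdf_sInf_setOf_le_cdf [IsProbabilityMeasure μ] [NullSingletonClass μ] (hp0 : 0 < p)
    (hp1 : p < 1) : cdf μ (sInf {x | p ≤ cdf μ x}) = p := by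
  set S := {x | p ≤ cdf μ x}
  have hne := nonempty_setOf_le_cdf (μ := μ) hp1
  have hbdd := bddBelow_setOf_le_cdf (μ := μ) hp0
  apply le_antisymm
  · -- `cdf μ` is `< p` to the left of `sInf S` and has no jump there
    have hleft : Function.leftLim (cdf μ) (sInf S) ≤ p := by
      refine le_of_tendsto ((monotone_cdf μ).tendsto_leftLim _) ?_
      filter_upwards [self_mem_nhdsWithin] with x hx
      exact le_of_not_ge fun h => (csInf_le hbdd h).not_gt hx
    have hatom := (cdf μ).measure_singleton (sInf S)
    rw [measure_cdf, measure_singleton, eq_comm, ENNReal.ofReal_eq_zero] at hatom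
    linarith
  · refine ge_of_tendsto (((cdf μ).right_continuous _).tendsto.mono_left
      (nhdsWithin_mono _ Ioi_subset_Ici_self)) ?_
    filter_upwards [self_mem_nhdsWithin] with x hx
    obtain ⟨y, hyS, hyx⟩ := (csInf_lt_iff hbdd hne).mp hx
    exact hyS.trans (monotone_cdf μ hyx.le)

end Quantile

lemma MeasurableEmbedding.map_cond {α β : Type*} [MeasurableSpace α] [MeasurableSpace β]
    {f : α → β} (hf : MeasurableEmbedding f) (μ : Measure α) (t : Set β) :
    (μ.map f)[|t] = (μ[|f ⁻¹' t]).map f := by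
  simp only [ProbabilityTheory.cond, hf.restrict_map, hf.map_apply, Measure.map_smul]

section AffineInvariance

open Set

instance inst_s19 (m s : ℝ) : IsProbabilityMeasure (gauss m s) := by
  unfold gauss; infer_instance

lemma integrable_id_gauss (m s : ℝ) : Integrable (fun x => x) (gauss m s) := by
  rw [gauss]; exact IsGaussian.integrable_fun_id

lemma gauss_map_affine (m s : ℝ) : (gauss 0 1).map (fun x => s * x + m) = gauss m s := by
  have hcomp : (fun x : ℝ => s * x + m) = (· + m) ∘ (s * ·) := rfl
  rw [hcomp, ← Measure.map_map (by fun_prop) (by fun_prop), gauss, gauss,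
    gaussianReal_map_const_mul, gaussianReal_map_add_const]
  congr 1
  · ring
  · ext; simp [sq_nonneg]

variable {s α β : ℝ}

lemma measurableEmbedding_affine (hs : s ≠ 0) (m : ℝ) :
    MeasurableEmbedding (fun x : ℝ => s * x + m) :=
  (measurableEmbedding_addRight m).comp (measurableEmbedding_mulLeft₀ hs)

lemma nullSingletonClass_gauss (m : ℝ) (hs : s ≠ 0) : NullSingletonClass (gauss m s) :=
  ⟨fun _ => gaussianReal_absolutelyContinuous m (by simpa using hs) (measure_singleton _)⟩

lemma normCdf_affine (hs : 0 < s) (m y : ℝ) : normCdf m s (s * y + m) = normCdf 0 1 y := by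
  have hpre : (fun x => s * x + m) ⁻¹' Iic (s * y + m) = Iic y := by
    ext x; simp [hs]
  rw [normCdf, normCdf, cdf_eq_real, cdf_eq_real, ← gauss_map_affine m s, measureReal_def,
    measureReal_def, (measurableEmbedding_affine hs.ne' m).map_apply, hpre]

lemma normQuantile_affine (hs : 0 < s) (m : ℝ) {p : ℝ} (hp0 : 0 < p) (hp1 : p < 1) :
    normQuantile m s p = s * normQuantile 0 1 p + m := by
  set f := fun y => s * y + m
  have hsurj : Function.Surjective f := fun x =>
    ⟨(x - m) / s, by simp only [f]; field_simp; ring⟩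
  have hset : {x | p ≤ normCdf m s x} = f '' {y | p ≤ normCdf 0 1 y} := by
    rw [← image_preimage_eq {x | p ≤ normCdf m s x} hsurj]
    ext; simp [f, normCdf_affine hs]
  have hmono : Monotone f := fun a b hab => by simp only [f]; gcongr
  rw [normQuantile, hset, ← hmono.map_csInf_of_continuousAt (A := {y | p ≤ normCdf 0 1 y})
    (by fun_prop) (nonempty_setOf_le_cdf hp1) (bddBelow_setOf_le_cdf hp0)]
  rfl

lemma cdf_gauss_normQuantile (hs : s ≠ 0) (m : ℝ) {p : ℝ} (hp0 : 0 < p) (hp1 : p < 1) :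
    cdf (gauss m s) (normQuantile m s p) = p :=
  have := nullSingletonClass_gauss m hs
  cdf_sInf_setOf_le_cdf hp0 hp1

lemma gauss_condSet (hs : s ≠ 0) (m : ℝ) (h0 : 0 ≤ α) (hαβ : α < β) (h1 : β ≤ 1) :
    gauss m s (condSet m s α β) = ENNReal.ofReal (β - α) := by
  rcases h0.eq_or_lt with rfl | hα0 <;> rcases h1.eq_or_lt with rfl | hβ1
  · simp [condSet]
  · have hset : condSet m s 0 β = Iic (normQuantile m s β) := by
      ext x; simp [condSet, hβ1.ne]
    rw [hset, ← ofReal_cdf, cdf_gauss_normQuantile hs m hαβ hβ1, sub_zero]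
  · have hset : condSet m s α 1 = (Iic (normQuantile m s α))ᶜ := by
      ext x; simp [condSet, hα0.ne']
    rw [hset, prob_compl_eq_one_sub measurableSet_Iic, ← ofReal_cdf,
      cdf_gauss_normQuantile hs m hα0 hαβ, ← ENNReal.ofReal_one, ENNReal.ofReal_sub _ h0]
  · have hset : condSet m s α β = Ioc (normQuantile m s α) (normQuantile m s β) := by
      ext x; simp [condSet, hα0.ne', hβ1.ne]
    rw [hset, ← measure_cdf (gauss m s), StieltjesFunction.measure_Ioc,
      cdf_gauss_normQuantile hs m hα0 (hαβ.trans hβ1),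
      cdf_gauss_normQuantile hs m (h0.trans_lt hαβ) hβ1]

lemma mem_condSet_affine (hs : 0 < s) (m : ℝ) (h0 : 0 ≤ α) (hαβ : α < β) (h1 : β ≤ 1)
    (x : ℝ) : s * x + m ∈ condSet m s α β ↔ x ∈ condSet 0 1 α β := by
  simp only [condSet, mem_ofPred_eq]
  refine and_congr (or_congr_right' fun hα => ?_) (or_congr_right' fun hβ => ?_)
  · rw [normQuantile_affine hs m (h0.lt_of_ne' hα) (hαβ.trans_le h1)]
    simp [hs]
  · rw [normQuantile_affine hs m (h0.trans_lt hαβ) (h1.lt_of_ne hβ)]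
    simp [hs]

lemma cond_gauss_condSet (hs : 0 < s) (m : ℝ) (h0 : 0 ≤ α) (hαβ : α < β) (h1 : β ≤ 1) :
    (gauss m s)[|condSet m s α β] =
      ((gauss 0 1)[|condSet 0 1 α β]).map (fun x => s * x + m) := by
  rw [← gauss_map_affine m s, (measurableEmbedding_affine hs.ne' m).map_cond]
  congr
  ext x
  exact mem_condSet_affine hs m h0 hαβ h1 x

lemma condMean_affine (hs : 0 < s) (m : ℝ) (h0 : 0 ≤ α) (hαβ : α < β) (h1 : β ≤ 1) :
    condMean m s α β = s * condMean 0 1 α β + m := by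
  have hpos : gauss 0 1 (condSet 0 1 α β) ≠ 0 := by
    simpa [gauss_condSet one_ne_zero 0 h0 hαβ h1] using hαβ
  have := cond_isProbabilityMeasure hpos
  have hint : Integrable (fun x => x) ((gauss 0 1)[|condSet 0 1 α β]) :=
    (integrable_id_gauss 0 1).restrict.smul_measure (ENNReal.inv_ne_top.2 hpos)
  rw [condMean, cond_gauss_condSet hs m h0 hαβ h1,
    (measurableEmbedding_affine hs.ne' m).integral_map,
    integral_add (hint.const_mul s) (integrable_const m), integral_const_mul]
  simp [condMean]

lemma condVar_affine (hs : 0 < s) (m : ℝ) (h0 : 0 ≤ α) (hαβ : α < β) (h1 : β ≤ 1) :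
    condVar m s α β = s ^ 2 * condVar 0 1 α β := by
  rw [_root_.condVar, cond_gauss_condSet hs m h0 hαβ h1,
    (measurableEmbedding_affine hs.ne' m).integral_map, condMean_affine hs m h0 hαβ h1,
    _root_.condVar, ← integral_const_mul]
  congr with x
  ring

lemma Yfun_affine (hs : 0 < s) (m : ℝ) (h0 : 0 ≤ α) (hαβ : α < β) (h1 : β ≤ 1)
    (x : ℝ) : Yfun m s α β (s * x + m) = s ^ 2 * Yfun 0 1 α β x := by
  have hα : α ≠ 0 → normQuantile m s α = s * normQuantile 0 1 α + m := fun hα =>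
    normQuantile_affine hs m (h0.lt_of_ne' hα) (hαβ.trans_le h1)
  have hβ : β ≠ 1 → normQuantile m s β = s * normQuantile 0 1 β + m := fun hβ =>
    normQuantile_affine hs m (h0.trans_lt hαβ) (h1.lt_of_ne hβ)
  simp only [Yfun, mem_condSet_affine hs m h0 hαβ h1, condMean_affine hs m h0 hαβ h1,
    condVar_affine hs m h0 hαβ h1]
  by_cases hα0 : α = 0 <;> by_cases hβ1 : β = 1 <;>
    simp (disch := assumption) only [hα0, hβ1, hα, hβ, add_le_add_iff_right,
      mul_le_mul_iff_right₀ hs, if_true, if_false] <;>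
    split_ifs <;> ring

lemma covG_affine (hs : s ≠ 0) (m : ℝ) {U V U' V' : ℝ → ℝ} (c : ℝ)
    (hU : ∀ x, U (s * x + m) = c * U' x) (hV : ∀ x, V (s * x + m) = c * V' x) :
    covG m s U V = c ^ 2 * covG 0 1 U' V' := by
  simp only [covG, ← gauss_map_affine m s, (measurableEmbedding_affine hs m).integral_map, hU, hV,
    integral_const_mul, mul_mul_mul_comm c, ← sq]
  ring

lemma SigmaMat_affine (hs : 0 < s) (m : ℝ) {q : ℝ} (hq0 : 0 < q) (hq : q < 1 / 2) :
    SigmaMat m s q = s ^ 4 • SigmaMat 0 1 q := by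
  have hlevels : ∀ j,
      0 ≤ (lmrSet q j).1 ∧ (lmrSet q j).1 < (lmrSet q j).2 ∧ (lmrSet q j).2 ≤ 1 := by
    intro j
    fin_cases j <;>
      simp only [lmrSet, Fin.zero_eta, Fin.mk_one, Fin.reduceFinMk, Fin.isValue,
        Matrix.cons_val_zero, Matrix.cons_val_one, Matrix.cons_val] <;>
      and_intros <;> linarith
  ext j k
  obtain ⟨hj0, hj, hj1⟩ := hlevels j
  obtain ⟨hk0, hk, hk1⟩ := hlevels k
  rw [SigmaMat, covG_affine hs.ne' m (s ^ 2)
    (fun x => by rw [Yfun_affine hs m hj0 hj hj1, mul_div_assoc])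
    (fun x => by rw [Yfun_affine hs m hk0 hk hk1, mul_div_assoc])]
  simp only [SigmaMat, Matrix.smul_apply, smul_eq_mul]
  ring

lemma tau2_affine (hs : 0 < s) (m : ℝ) {q : ℝ} (hq0 : 0 < q) (hq : q < 1 / 2) :
    tau2 m s q = s ^ 4 * tau2 0 1 q := by
  rw [tau2, tau2, SigmaMat_affine hs m hq0 hq, Matrix.smul_mulVec, dotProduct_smul, smul_eq_mul]

lemma stdCdf_mem_Ioo_of_root {x₀ : ℝ} (hx₀ : x₀ < 0)
    (hroot : -x₀ * stdCdf x₀ - stdPdf x₀ * (1 - 2 * stdCdf x₀) = 0) :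
    stdCdf x₀ ∈ Ioo 0 (1 / 2) := by
  have hpdf : 0 < stdPdf x₀ := by unfold stdPdf; positivity
  have hcdf : 0 ≤ stdCdf x₀ := cdf_nonneg _ _
  have hpos : 0 < stdCdf x₀ := hcdf.lt_of_ne fun h => by rw [← h] at hroot; linarith
  exact ⟨hpos, by nlinarith [mul_pos (neg_pos.2 hx₀) hpos]⟩

end AffineInvariance

theorem SigmaMat_scale_invariant (m s : ℝ) (hs : 0 < s) (x₀ q : ℝ) (hx₀ : x₀ < 0)
    (hroot : -x₀ * stdCdf x₀ - stdPdf x₀ * (1 - 2 * stdCdf x₀) = 0)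
    (hq : q = stdCdf x₀) :
    (∀ j k : Fin 3, SigmaMat m s q j k / s ^ 4 = SigmaMat 0 1 q j k) ∧
    rhoConst m s q = Real.sqrt (tau2 0 1 q) := by
  obtain ⟨hq0, hq2⟩ := hq ▸ stdCdf_mem_Ioo_of_root hx₀ hroot
  have hs2 : 0 < s ^ 2 := by positivity
  refine ⟨fun j k => ?_, ?_⟩
  · rw [SigmaMat_affine hs m hq0 hq2, Matrix.smul_apply, smul_eq_mul,
      mul_div_cancel_left₀ _ (by positivity)]
  · rw [rhoConst, tau2_affine hs m hq0 hq2, show s ^ 4 = (s ^ 2) ^ 2 by ring,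
      Real.sqrt_mul (sq_nonneg _), Real.sqrt_sq hs2.le, mul_div_cancel_left₀ _ hs2.ne']
end
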